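/- arXiv:2203.02053 — 3 statements merged into one kernel-verified Lean document; each statement's English description precedes it below -/
import Mathlib

section
/- Let W ∈ ℝ^{d_out × d_in} be a random matrix whose entries W_{k,l} are independent, each distributed according to a distribution that is symmetric about 0 with variance 1/d_out, and let b ∈ ℝ^{d_out} have independent entries, each symmetric about 0 with variance 1/d_out, with W and b independent. Then for any fixed vectors u, v ∈ ℝ^{d_in}: 1 + ⟨u,v⟩ ≤ E[(Wu + b)ᵀ(Wv + b)] ≤ 2·E[φ(Wu + b)ᵀ φ(Wv + b)]. -/
/-!
The entries of `W` and `b` are independent and centred with second moment `1 / d_out`, hence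
orthogonal in `L²`. Each coordinate of `Wu + b` is a linear combination of one row of `W` and one
entry of `b`, so the expected product of the `k`-th coordinates of `Wu + b` and `Wv + b` is
`(1 + ⟨u, v⟩) / d_out`; summing over the `d_out` coordinates, the first inequality is an equality.

For the second, independence and symmetry of the entries make the joint law of all entries, and
hence of the pair `(Wu + b, Wv + b)`, invariant under negation. So `φ(x)ᵀφ(y)` and `φ(-x)ᵀφ(-y)`
have the same mean, and it remains to integrate `xᵀy ≤ φ(x)ᵀφ(y) + φ(-x)ᵀφ(-y)`.
-/

open MeasureTheory ProbabilityTheory Real Matrix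

noncomputable section

/-- The ReLU activation applied elementwise to a vector. -/
def reluV {n : ℕ} (x : Fin n → ℝ) : Fin n → ℝ := fun i => max (x i) 0

section Symmetry

variable {Ω E F : Type*} [MeasurableSpace Ω] {μ : Measure Ω}
  [MeasurableSpace E] [Neg E] [MeasurableNeg E]

theorem integral_comp_neg_eq_of_map_eq_map_neg {Z : Ω → E} (hZ : AEMeasurable Z μ)
    (hsymm : μ.map Z = μ.map fun ω => -Z ω) {Φ : E → ℝ} (hΦ : Measurable Φ) :
    ∫ ω, Φ (-Z ω) ∂μ = ∫ ω, Φ (Z ω) ∂μ := by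
  have hZn : AEMeasurable (fun ω => -Z ω) μ := measurable_neg.comp_aemeasurable hZ
  rw [← integral_map hZ hΦ.aestronglyMeasurable, hsymm,
    integral_map hZn hΦ.aestronglyMeasurable]

theorem integral_eq_zero_of_map_eq_map_neg {f : Ω → ℝ} (hf : AEMeasurable f μ)
    (hsymm : μ.map f = μ.map fun ω => -f ω) : ∫ ω, f ω ∂μ = 0 := by
  have h := integral_comp_neg_eq_of_map_eq_map_neg hf hsymm measurable_id
  simp only [id, integral_neg] at h
  linarith

theorem map_comp_eq_map_neg_of_odd [MeasurableSpace F] [Neg F] {Z : Ω → E} (hZ : Measurable Z)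
    (hsymm : μ.map Z = μ.map fun ω => -Z ω) {L : E → F} (hL : Measurable L)
    (hodd : ∀ z, L (-z) = -L z) :
    μ.map (fun ω => L (Z ω)) = μ.map fun ω => -L (Z ω) := by
  calc μ.map (fun ω => L (Z ω)) = (μ.map Z).map L := (Measure.map_map hL hZ).symm
    _ = (μ.map fun ω => -Z ω).map L := by rw [hsymm]
    _ = μ.map fun ω => -L (Z ω) := by
      have hZn : Measurable fun ω => -Z ω := measurable_neg.comp hZ
      rw [Measure.map_map hL hZn]
      simp only [Function.comp_def, hodd]

theorem ProbabilityTheory.iIndepFun.map_eq_map_neg {ι : Type*} [Fintype ι]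
    [IsProbabilityMeasure μ] {f : ι → Ω → ℝ} (hindep : iIndepFun f μ)
    (hf : ∀ i, Measurable (f i)) (hsymm : ∀ i, μ.map (f i) = μ.map fun ω => -f i ω) :
    μ.map (fun ω i => f i ω) = μ.map fun ω => -fun i => f i ω := by
  have hneg : iIndepFun (fun i ω => -f i ω) μ :=
    hindep.comp (fun _ => Neg.neg) fun _ => measurable_neg
  rw [hindep.map_fun_eq_pi_map fun i => (hf i).aemeasurable, funext hsymm]
  exact (hneg.map_fun_eq_pi_map fun i => (hf i).neg.aemeasurable).symm

end Symmetry

section SecondMoments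

variable {Ω ι : Type*} [MeasurableSpace Ω] {μ : Measure Ω}

theorem ProbabilityTheory.iIndepFun.integral_mul_eq_zero [IsProbabilityMeasure μ]
    {f : ι → Ω → ℝ} (hindep : iIndepFun f μ) (hf : ∀ i, AEStronglyMeasurable (f i) μ)
    (hmean : ∀ i, ∫ ω, f i ω ∂μ = 0) :
    Pairwise fun i j => ∫ ω, f i ω * f j ω ∂μ = 0 := by
  intro i j hij
  simpa [hmean] using (hindep.indepFun hij).integral_mul_eq_mul_integral (hf i) (hf j)

theorem memLp_dotProduct [Fintype ι] {p : ENNReal} {f : ι → Ω → ℝ} (hf : ∀ i, MemLp (f i) p μ)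
    (a : ι → ℝ) : MemLp (fun ω => a ⬝ᵥ fun i => f i ω) p μ :=
  memLp_finsetSum _ fun i _ => (hf i).const_mul (a i)

theorem integral_dotProduct_mul_dotProduct [Fintype ι] {f : ι → Ω → ℝ} {s : ℝ}
    (hf : ∀ i, MemLp (f i) 2 μ) (horth : Pairwise fun i j => ∫ ω, f i ω * f j ω ∂μ = 0)
    (hsq : ∀ i, ∫ ω, f i ω ^ 2 ∂μ = s) (a c : ι → ℝ) :
    ∫ ω, (a ⬝ᵥ fun i => f i ω) * (c ⬝ᵥ fun i => f i ω) ∂μ = s * (a ⬝ᵥ c) := by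
  classical
  have hint (i j : ι) : Integrable (fun ω => f i ω * f j ω) μ := (hf i).integrable_mul (hf j)
  have hmoment (i j : ι) : ∫ ω, f i ω * f j ω ∂μ = if i = j then s else 0 := by
    split_ifs with h
    · subst h; simpa [sq] using hsq i
    · exact horth h
  calc ∫ ω, (a ⬝ᵥ fun i => f i ω) * (c ⬝ᵥ fun i => f i ω) ∂μ
      = ∫ ω, ∑ i, ∑ j, a i * c j * (f i ω * f j ω) ∂μ := by
        congr 1 with ω
        simp only [dotProduct, Finset.sum_mul_sum]
        exact Finset.sum_congr rfl fun i _ => Finset.sum_congr rfl fun j _ => by ring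
    _ = ∑ i, ∑ j, a i * c j * ∫ ω, f i ω * f j ω ∂μ := by
        rw [integral_finsetSum _ fun i _ =>
          integrable_finsetSum _ fun j _ => (hint i j).const_mul _]
        refine Finset.sum_congr rfl fun i _ => ?_
        rw [integral_finsetSum _ fun j _ => (hint i j).const_mul _]
        simp only [integral_const_mul]
    _ = s * (a ⬝ᵥ c) := by
        simp [hmoment, dotProduct, Finset.mul_sum, mul_comm]

end SecondMoments

section Layer

variable {Ω m n : Type*}

def layerEntries (W : Ω → Matrix m n ℝ) (b : Ω → m → ℝ) : (m × n) ⊕ m → Ω → ℝ :=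
  Sum.elim (fun kl ω => W ω kl.1 kl.2) fun k ω => b ω k

def rowEntryIndex (k : m) (o : Option n) : (m × n) ⊕ m :=
  o.elim (Sum.inr k) fun l => Sum.inl (k, l)

theorem rowEntryIndex_injective (k : m) : Function.Injective (rowEntryIndex (n := n) k) := by
  rintro (_ | l) (_ | l') h <;> simp_all [rowEntryIndex]

theorem mulVec_add_apply_eq_dotProduct [Fintype n] (W : Ω → Matrix m n ℝ) (b : Ω → m → ℝ)
    (u : n → ℝ) (k : m) (ω : Ω) :
    (W ω *ᵥ u + b ω) k =
      (fun o : Option n => o.elim 1 u) ⬝ᵥ fun o => layerEntries W b (rowEntryIndex k o) ω := by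
  simp [dotProduct, mulVec, Fintype.sum_option, layerEntries, rowEntryIndex, mul_comm, add_comm]

theorem optionElim_dotProduct_optionElim [Fintype n] (u v : n → ℝ) :
    (fun o : Option n => o.elim 1 u) ⬝ᵥ (fun o => o.elim 1 v) = 1 + u ⬝ᵥ v := by
  simp [dotProduct, Fintype.sum_option]

variable [MeasurableSpace Ω] {μ : Measure Ω} [Fintype n]
  {W : Ω → Matrix m n ℝ} {b : Ω → m → ℝ}

theorem memLp_mulVec_add_apply (hL2 : ∀ i, MemLp (layerEntries W b i) 2 μ) (u : n → ℝ) (k : m) :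
    MemLp (fun ω => (W ω *ᵥ u + b ω) k) 2 μ := by
  simp only [mulVec_add_apply_eq_dotProduct]
  exact memLp_dotProduct (fun o => hL2 _) _

theorem integral_mulVec_add_dotProduct_mulVec_add [Fintype m] [IsProbabilityMeasure μ] {s : ℝ}
    (hindep : iIndepFun (layerEntries W b) μ) (hL2 : ∀ i, MemLp (layerEntries W b i) 2 μ)
    (hmean : ∀ i, ∫ ω, layerEntries W b i ω ∂μ = 0)
    (hsq : ∀ i, ∫ ω, layerEntries W b i ω ^ 2 ∂μ = s) (u v : n → ℝ) :
    ∫ ω, (W ω *ᵥ u + b ω) ⬝ᵥ (W ω *ᵥ v + b ω) ∂μ = Fintype.card m * (s * (1 + u ⬝ᵥ v)) := by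
  have hrow (k : m) : ∫ ω, (W ω *ᵥ u + b ω) k * (W ω *ᵥ v + b ω) k ∂μ = s * (1 + u ⬝ᵥ v) := by
    have horth := iIndepFun.integral_mul_eq_zero
      (iIndepFun.precomp (rowEntryIndex_injective k) hindep)
      (fun o => (hL2 _).aestronglyMeasurable) fun o => hmean _
    simp only [mulVec_add_apply_eq_dotProduct]
    rw [integral_dotProduct_mul_dotProduct (fun o => hL2 _) horth (fun o => hsq _),
      optionElim_dotProduct_optionElim]
  calc ∫ ω, (W ω *ᵥ u + b ω) ⬝ᵥ (W ω *ᵥ v + b ω) ∂μ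
      = ∑ k, ∫ ω, (W ω *ᵥ u + b ω) k * (W ω *ᵥ v + b ω) k ∂μ := integral_finsetSum _ fun k _ =>
        (memLp_mulVec_add_apply hL2 u k).integrable_mul (memLp_mulVec_add_apply hL2 v k)
    _ = Fintype.card m * (s * (1 + u ⬝ᵥ v)) := by
      simp only [hrow, Finset.sum_const, Finset.card_univ, nsmul_eq_mul]

theorem map_mulVec_add_prod_eq_map_neg [Fintype m] [IsProbabilityMeasure μ]
    (hindep : iIndepFun (layerEntries W b) μ) (hmeas : ∀ i, Measurable (layerEntries W b i))
    (hsymm : ∀ i, μ.map (layerEntries W b i) = μ.map fun ω => -layerEntries W b i ω)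
    (u v : n → ℝ) :
    μ.map (fun ω => (W ω *ᵥ u + b ω, W ω *ᵥ v + b ω)) =
      μ.map fun ω => -(W ω *ᵥ u + b ω, W ω *ᵥ v + b ω) := by
  let L : ((m × n) ⊕ m → ℝ) → (m → ℝ) × (m → ℝ) := fun g =>
    (Matrix.of (fun k l => g (.inl (k, l))) *ᵥ u + fun k => g (.inr k),
      Matrix.of (fun k l => g (.inl (k, l))) *ᵥ v + fun k => g (.inr k))
  have hL : Measurable L := Continuous.measurable (by fun_prop)
  have hodd (g) : L (-g) = -L g := by
    ext k <;> simp [L, mulVec, dotProduct] <;> ring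
  exact map_comp_eq_map_neg_of_odd (measurable_pi_iff.2 hmeas)
    (hindep.map_eq_map_neg hmeas hsymm) hL hodd

end Layer

section Relu

variable {n : ℕ}

@[fun_prop]
theorem continuous_reluV : Continuous (reluV (n := n)) :=
  continuous_pi fun i => (continuous_apply i).max continuous_const

theorem mul_le_max_mul_max_add_max_neg_mul_max_neg (a b : ℝ) :
    a * b ≤ max a 0 * max b 0 + max (-a) 0 * max (-b) 0 := by
  rcases le_total a 0 with ha | ha <;> rcases le_total b 0 with hb | hb <;>
    simp [ha, hb] <;> nlinarith

theorem dotProduct_le_reluV_add_reluV_neg (x y : Fin n → ℝ) :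
    x ⬝ᵥ y ≤ reluV x ⬝ᵥ reluV y + reluV (-x) ⬝ᵥ reluV (-y) := by
  simp only [dotProduct, ← Finset.sum_add_distrib]
  exact Finset.sum_le_sum fun i _ => mul_le_max_mul_max_add_max_neg_mul_max_neg (x i) (y i)

variable {Ω : Type*} [MeasurableSpace Ω] {μ : Measure Ω} {X Y : Ω → Fin n → ℝ}

theorem integrable_dotProduct (hX : ∀ k, MemLp (fun ω => X ω k) 2 μ)
    (hY : ∀ k, MemLp (fun ω => Y ω k) 2 μ) : Integrable (fun ω => X ω ⬝ᵥ Y ω) μ :=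
  integrable_finsetSum _ fun k _ => (hX k).integrable_mul (hY k)

theorem integral_dotProduct_le_two_mul_integral_reluV (hX : ∀ k, MemLp (fun ω => X ω k) 2 μ)
    (hY : ∀ k, MemLp (fun ω => Y ω k) 2 μ)
    (hsymm : μ.map (fun ω => (X ω, Y ω)) = μ.map fun ω => -(X ω, Y ω)) :
    ∫ ω, X ω ⬝ᵥ Y ω ∂μ ≤ 2 * ∫ ω, reluV (X ω) ⬝ᵥ reluV (Y ω) ∂μ := by
  have hXY : AEMeasurable (fun ω => (X ω, Y ω)) μ :=
    (aemeasurable_pi_lambda _ fun k => (hX k).aemeasurable).prodMk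
      (aemeasurable_pi_lambda _ fun k => (hY k).aemeasurable)
  have hneg : ∫ ω, reluV (-X ω) ⬝ᵥ reluV (-Y ω) ∂μ = ∫ ω, reluV (X ω) ⬝ᵥ reluV (Y ω) ∂μ :=
    integral_comp_neg_eq_of_map_eq_map_neg hXY hsymm
      (Φ := fun p => reluV p.1 ⬝ᵥ reluV p.2) (Continuous.measurable (by fun_prop))
  have hpos : Integrable (fun ω => reluV (X ω) ⬝ᵥ reluV (Y ω)) μ :=
    integrable_dotProduct (fun k => (hX k).pos_part) fun k => (hY k).pos_part
  have hnegpart : Integrable (fun ω => reluV (-X ω) ⬝ᵥ reluV (-Y ω)) μ :=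
    integrable_dotProduct (fun k => (hX k).neg_part) fun k => (hY k).neg_part
  calc ∫ ω, X ω ⬝ᵥ Y ω ∂μ
      ≤ ∫ ω, reluV (X ω) ⬝ᵥ reluV (Y ω) + reluV (-X ω) ⬝ᵥ reluV (-Y ω) ∂μ :=
        integral_mono (integrable_dotProduct hX hY) (hpos.add hnegpart) fun ω =>
          dotProduct_le_reluV_add_reluV_neg (X ω) (Y ω)
    _ = 2 * ∫ ω, reluV (X ω) ⬝ᵥ reluV (Y ω) ∂μ := by
        rw [integral_add hpos hnegpart, hneg, two_mul]

end Relu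

/-- Let `W ∈ ℝ^{d_out × d_in}` be a random matrix whose entries are independent,
each distributed symmetrically about 0 with variance `1/d_out`, and let `b ∈ ℝ^{d_out}` have
independent entries, each symmetric about 0 with variance `1/d_out`, with `W` and `b`
independent (all entries jointly independent). Then for any fixed `u, v ∈ ℝ^{d_in}`:
`1 + ⟨u,v⟩ ≤ E[(Wu + b)ᵀ(Wv + b)] ≤ 2·E[φ(Wu + b)ᵀ φ(Wv + b)]`. -/
theorem statement1
    {Ω : Type*} [MeasurableSpace Ω] (μ : Measure Ω) [IsProbabilityMeasure μ]
    (d_in d_out : ℕ) (hdout : 0 < d_out)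
    (W : Ω → Matrix (Fin d_out) (Fin d_in) ℝ) (b : Ω → Fin d_out → ℝ)
    (hWmeas : ∀ k l, Measurable fun ω => W ω k l)
    (hbmeas : ∀ k, Measurable fun ω => b ω k)
    (hWsymm : ∀ k l, Measure.map (fun ω => W ω k l) μ = Measure.map (fun ω => -W ω k l) μ)
    (hbsymm : ∀ k, Measure.map (fun ω => b ω k) μ = Measure.map (fun ω => -b ω k) μ)
    (hWvar : ∀ k l, variance (fun ω => W ω k l) μ = 1 / d_out)
    (hbvar : ∀ k, variance (fun ω => b ω k) μ = 1 / d_out)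
    (hWL2 : ∀ k l, MemLp (fun ω => W ω k l) 2 μ)
    (hbL2 : ∀ k, MemLp (fun ω => b ω k) 2 μ)
    (hindep : iIndepFun
      (Sum.elim (fun (kl : Fin d_out × Fin d_in) (ω : Ω) => W ω kl.1 kl.2)
        (fun (k : Fin d_out) (ω : Ω) => b ω k)) μ)
    (u v : Fin d_in → ℝ) :
    1 + u ⬝ᵥ v ≤ ∫ ω, ((W ω).mulVec u + b ω) ⬝ᵥ ((W ω).mulVec v + b ω) ∂μ ∧
      ∫ ω, ((W ω).mulVec u + b ω) ⬝ᵥ ((W ω).mulVec v + b ω) ∂μ ≤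
        2 * ∫ ω, reluV ((W ω).mulVec u + b ω) ⬝ᵥ reluV ((W ω).mulVec v + b ω) ∂μ := by
  have hmeas : ∀ i, Measurable (layerEntries W b i) :=
    Sum.forall.2 ⟨fun kl => hWmeas kl.1 kl.2, hbmeas⟩
  have hsymm : ∀ i, μ.map (layerEntries W b i) = μ.map fun ω => -layerEntries W b i ω :=
    Sum.forall.2 ⟨fun kl => hWsymm kl.1 kl.2, hbsymm⟩
  have hvar : ∀ i, variance (layerEntries W b i) μ = 1 / d_out :=
    Sum.forall.2 ⟨fun kl => hWvar kl.1 kl.2, hbvar⟩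
  have hL2 : ∀ i, MemLp (layerEntries W b i) 2 μ := Sum.forall.2 ⟨fun kl => hWL2 kl.1 kl.2, hbL2⟩
  have hmean (i) : ∫ ω, layerEntries W b i ω ∂μ = 0 :=
    integral_eq_zero_of_map_eq_map_neg (hmeas i).aemeasurable (hsymm i)
  have hsq (i) : ∫ ω, layerEntries W b i ω ^ 2 ∂μ = 1 / d_out := by
    rw [← variance_of_integral_eq_zero (hmeas i).aemeasurable (hmean i), hvar i]
  have hE := integral_mulVec_add_dotProduct_mulVec_add hindep hL2 hmean hsq u v
  rw [Fintype.card_fin, ← mul_assoc, mul_one_div_cancel (Nat.cast_ne_zero.2 hdout.ne'),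
    one_mul] at hE
  exact ⟨hE.ge, integral_dotProduct_le_two_mul_integral_reluV (memLp_mulVec_add_apply hL2 u)
    (memLp_mulVec_add_apply hL2 v) (map_mulVec_add_prod_eq_map_neg hindep hmeas hsymm u v)⟩

end
end

section
/- Let u ∈ ℝ^{d_in} be a fixed vector, let W ∈ ℝ^{d_out × d_in} have independent entries W_{k,l} ~ N(0, 1/d_out), and let b ∈ ℝ^{d_out} have independent entries b_k ~ N(0, 1/d_out), with W and b independent. Then for every ε > 0: P( | 2‖φ(Wu + b)‖² / (1 + ‖u‖²) − 1 | ≥ ε ) ≤ 12/(d_out · ε²). -/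
open MeasureTheory ProbabilityTheory Real Matrix NNReal

noncomputable section

/-- The Euclidean norm of a vector in `ℝ^n`. -/
def euclNorm {n : ℕ} (x : Fin n → ℝ) : ℝ := Real.sqrt (x ⬝ᵥ x)

/-!
Each preactivation `X k = (W u + b) k` is a sum of independent centred Gaussians, hence
`N(0, v)` with `v = (1 + ‖u‖²) / d_out`, and distinct `k` use disjoint sets of entries of
`[W | b]`, so the `X k` are independent. Since the Gaussian is symmetric,
`E φ(X)² = E X² / 2 = v / 2` and `E φ(X)⁴ = E X⁴ / 2 = 3 v² / 2`, the fourth moment being the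
fourth derivative at `0` of the moment generating function `exp (v t² / 2)`. Hence
`2 ‖φ(W u + b)‖² / (1 + ‖u‖²)` is a sum of `d_out` independent terms with mean `1 / d_out` and
second moment `6 / d_out²`, and Chebyshev's inequality bounds the probability by
`6 / (d_out ε²)`.
-/

lemma iteratedDeriv_four_exp_mul_sq_div_two (a : ℝ) :
    iteratedDeriv 4 (fun t => rexp (a * t ^ 2 / 2)) 0 = 3 * a ^ 2 := by
  set f : ℝ → ℝ := fun t => rexp (a * t ^ 2 / 2)
  have hf (t : ℝ) : HasDerivAt f (a * t * f t) t := by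
    convert ((hasDerivAt_pow 2 t).const_mul a |>.div_const 2).exp using 1
    simp only [f]; push_cast; ring
  have deriv_poly_mul {P P' Q : ℝ → ℝ} (hP : ∀ t, HasDerivAt P (P' t) t)
      (hQ : ∀ t, P' t + a * t * P t = Q t) :
      deriv (fun t => P t * f t) = fun t => Q t * f t :=
    funext fun t => by rw [← hQ]; convert ((hP t).fun_mul (hf t)).deriv using 1; ring
  have d1 : deriv f = fun t => a * t * f t := funext fun t => (hf t).deriv
  have d2 : deriv (fun t => a * t * f t) = fun t => (a + a ^ 2 * t ^ 2) * f t :=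
    deriv_poly_mul (fun t => (hasDerivAt_id' t).const_mul a) fun t => by ring
  have d3 : deriv (fun t => (a + a ^ 2 * t ^ 2) * f t)
      = fun t => (3 * a ^ 2 * t + a ^ 3 * t ^ 3) * f t :=
    deriv_poly_mul (fun t => ((hasDerivAt_pow 2 t).const_mul (a ^ 2)).const_add a) fun t => by ring
  have d4 : deriv (fun t => (3 * a ^ 2 * t + a ^ 3 * t ^ 3) * f t)
      = fun t => (3 * a ^ 2 + 6 * a ^ 3 * t ^ 2 + a ^ 4 * t ^ 4) * f t :=
    deriv_poly_mul (fun t => (((hasDerivAt_id' t).const_mul (3 * a ^ 2)).add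
      ((hasDerivAt_pow 3 t).const_mul (a ^ 3)))) fun t => by ring
  simp [iteratedDeriv_succ, d1, d2, d3, d4, f]

lemma integral_sq_gaussianReal (v : ℝ≥0) : ∫ x, x ^ 2 ∂gaussianReal 0 v = v := by
  rw [← variance_of_integral_eq_zero aemeasurable_id' integral_id_gaussianReal,
    variance_fun_id_gaussianReal]

lemma integral_pow_four_gaussianReal (v : ℝ≥0) : ∫ x, x ^ 4 ∂gaussianReal 0 v = 3 * v ^ 2 := by
  have h := iteratedDeriv_mgf_zero (X := id) (μ := gaussianReal 0 v)
    (by simp [integrableExpSet_id_gaussianReal]) 4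
  simp only [mgf_id_gaussianReal, zero_mul, zero_add, iteratedDeriv_four_exp_mul_sq_div_two] at h
  exact h.symm

instance isNegInvariant_gaussianReal (v : ℝ≥0) : (gaussianReal 0 v).IsNegInvariant :=
  ⟨by simpa [Measure.neg_def] using gaussianReal_map_neg (μ := 0) (v := v)⟩

lemma integrable_abs_pow_gaussianReal (μ : ℝ) (v : ℝ≥0) (n : ℕ) :
    Integrable (fun x => |x| ^ n) (gaussianReal μ v) := by
  simpa using (memLp_id_gaussianReal (μ := μ) (v := v) n).integrable_norm_pow'

lemma norm_max_zero_pow_le (n : ℕ) (x : ℝ) : ‖max x 0 ^ n‖ ≤ |x| ^ n := by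
  rw [Real.norm_eq_abs, abs_pow, abs_of_nonneg (le_max_right x 0)]
  exact pow_le_pow_left₀ (le_max_right x 0) (max_le (le_abs_self x) (abs_nonneg x)) n

lemma max_zero_pow_add_max_neg_zero_pow {n : ℕ} (hn : n ≠ 0) (x : ℝ) :
    max x 0 ^ n + max (-x) 0 ^ n = |x| ^ n := by
  rcases le_total x 0 with h | h
  · rw [max_eq_right h, max_eq_left (neg_nonneg.2 h), abs_of_nonpos h, zero_pow hn, zero_add]
  · rw [max_eq_left h, max_eq_right (neg_nonpos.2 h), abs_of_nonneg h, zero_pow hn, add_zero]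

lemma integrable_max_zero_pow {μ : Measure ℝ} {n : ℕ} (h : Integrable (fun x => |x| ^ n) μ) :
    Integrable (fun x => max x 0 ^ n) μ :=
  h.mono (by fun_prop) (ae_of_all _ fun x => (norm_max_zero_pow_le n x).trans_eq
    (abs_of_nonneg (by positivity)).symm)

lemma integral_max_zero_pow_of_isNegInvariant {μ : Measure ℝ} [μ.IsNegInvariant] {n : ℕ}
    (hn : n ≠ 0) (h : Integrable (fun x => |x| ^ n) μ) :
    ∫ x, max x 0 ^ n ∂μ = (∫ x, |x| ^ n ∂μ) / 2 := by
  have hneg : Integrable (fun x => max (-x) 0 ^ n) μ := (integrable_max_zero_pow h).comp_neg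
  have hsum := integral_add (integrable_max_zero_pow h) hneg
  rw [integral_neg_eq_self (fun x => max x 0 ^ n)] at hsum
  simp only [max_zero_pow_add_max_neg_zero_pow hn] at hsum
  linarith

lemma integral_max_zero_sq_gaussianReal (v : ℝ≥0) :
    ∫ x, max x 0 ^ 2 ∂gaussianReal 0 v = v / 2 := by
  rw [integral_max_zero_pow_of_isNegInvariant two_ne_zero (integrable_abs_pow_gaussianReal 0 v 2)]
  simp only [sq_abs, integral_sq_gaussianReal]

lemma integral_max_zero_pow_four_gaussianReal (v : ℝ≥0) :
    ∫ x, max x 0 ^ 4 ∂gaussianReal 0 v = 3 * v ^ 2 / 2 := by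
  rw [integral_max_zero_pow_of_isNegInvariant four_ne_zero (integrable_abs_pow_gaussianReal 0 v 4)]
  simp only [(by decide : Even 4).pow_abs, integral_pow_four_gaussianReal]

namespace ProbabilityTheory

variable {Ω ι : Type*} [MeasurableSpace Ω] {μ : Measure Ω} {f : ι → Ω → ℝ}

lemma iIndepFun.map_sum_eq_gaussianReal (hf : ∀ i, Measurable (f i)) (hindep : iIndepFun f μ)
    {m : ι → ℝ} {v : ι → ℝ≥0} (hlaw : ∀ i, μ.map (f i) = gaussianReal (m i) (v i))
    (s : Finset ι) : μ.map (∑ i ∈ s, f i) = gaussianReal (∑ i ∈ s, m i) (∑ i ∈ s, v i) := by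
  classical
  have := hindep.isProbabilityMeasure
  induction s using Finset.induction_on with
  | empty =>
    rw [Finset.sum_empty, Finset.sum_empty, Finset.sum_empty, gaussianReal_zero_var,
      show (0 : Ω → ℝ) = fun _ => 0 from rfl, Measure.map_const]
    simp
  | insert i s his ih =>
    rw [Finset.sum_insert his, Finset.sum_insert his, Finset.sum_insert his]
    exact gaussianReal_add_gaussianReal_of_indepFun
      (hindep.indepFun_finsetSum_of_notMem hf his).symm (hlaw i) ih

lemma iIndepFun.map_sum_mul_eq_gaussianReal (hf : ∀ i, Measurable (f i))
    (hindep : iIndepFun f μ) {v : ℝ≥0} (hlaw : ∀ i, μ.map (f i) = gaussianReal 0 v)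
    (c : ι → ℝ) (s : Finset ι) :
    μ.map (fun ω => ∑ i ∈ s, c i * f i ω) = gaussianReal 0 ((∑ i ∈ s, c i ^ 2).toNNReal * v) := by
  have hlaw' (i : ι) : μ.map (fun ω => c i * f i ω)
      = gaussianReal 0 ((c i ^ 2).toNNReal * v) := by
    rw [Real.toNNReal_of_nonneg (sq_nonneg _), show (fun ω => c i * f i ω) = (c i * ·) ∘ f i from rfl,
      ← Measure.map_map (measurable_const_mul (c i)) (hf i), hlaw i, gaussianReal_map_const_mul,
      mul_zero]
  have h := iIndepFun.map_sum_eq_gaussianReal (f := fun i ω => c i * f i ω)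
    (fun i => (hf i).const_mul (c i)) (hindep.comp (fun i x => c i * x)
      fun i => measurable_const_mul (c i)) hlaw' s
  rw [Finset.sum_fn, ← Finset.sum_mul] at h
  simp only [Finset.sum_const_zero] at h
  rw [h, Real.toNNReal_sum_of_nonneg fun i _ => sq_nonneg (c i)]

lemma iIndepFun.indepFun_sum_mul_of_disjoint (hf : ∀ i, Measurable (f i))
    (hindep : iIndepFun f μ) (c : ι → ℝ) {S T : Finset ι} (hST : Disjoint S T) :
    IndepFun (fun ω => ∑ i ∈ S, c i * f i ω) (fun ω => ∑ i ∈ T, c i * f i ω) μ := by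
  have h := (hindep.indepFun_finset S T hST hf).comp
    (φ := fun g : S → ℝ => ∑ i : S, c i * g i) (ψ := fun g : T → ℝ => ∑ i : T, c i * g i)
    (Finset.measurable_sum _ fun i _ => (measurable_pi_apply i).const_mul _)
    (Finset.measurable_sum _ fun i _ => (measurable_pi_apply i).const_mul _)
  convert h using 1 <;> exact funext fun ω => (Finset.sum_coe_sort _ (fun i => c i * f i ω)).symm

lemma measure_abs_sum_sub_ge_le [IsProbabilityMeasure μ] [Fintype ι] {Y : ι → Ω → ℝ} (hY : ∀ i, MemLp (Y i) 2 μ)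
    (hindep : Pairwise fun i j => IndepFun (Y i) (Y j) μ) {m σ : ℝ} (hm : ∀ i, μ[Y i] = m)
    (hσ : ∀ i, μ[Y i ^ 2] ≤ σ) {ε : ℝ} (hε : 0 < ε) :
    (μ {ω | ε ≤ |∑ i, Y i ω - Fintype.card ι * m|}).toReal ≤ Fintype.card ι * σ / ε ^ 2 := by
  have hmean : μ[∑ i, Y i] = Fintype.card ι * m := by
    simp only [Finset.sum_apply]
    rw [integral_finsetSum _ fun i _ => (hY i).integrable one_le_two]
    simp [hm]
  have hvar : variance (∑ i, Y i) μ ≤ Fintype.card ι * σ := by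
    rw [IndepFun.variance_sum (fun i _ => hY i) fun i _ j _ hij => hindep hij]
    calc ∑ i, variance (Y i) μ ≤ ∑ _i : ι, σ :=
          Finset.sum_le_sum fun i _ => (variance_le_expectation_sq (hY i).1).trans (hσ i)
      _ = Fintype.card ι * σ := by simp
  have hcheb := meas_ge_le_variance_div_sq (memLp_finsetSum' Finset.univ fun i _ => hY i) hε
  rw [hmean] at hcheb
  simp only [Finset.sum_apply] at hcheb
  calc _ ≤ variance (∑ i, Y i) μ / ε ^ 2 :=
        ENNReal.toReal_le_of_le_ofReal (div_nonneg (variance_nonneg _ _) (sq_nonneg _)) hcheb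
    _ ≤ _ := by gcongr

end ProbabilityTheory

lemma measure_abs_relu_energy_sub_one_ge_le {Ω ι : Type*} [MeasurableSpace Ω] {μ : Measure Ω}
    [IsProbabilityMeasure μ] [Fintype ι] [Nonempty ι] {X : ι → Ω → ℝ} {v : ℝ≥0} (hv : v ≠ 0)
    (hX : ∀ i, Measurable (X i)) (hlaw : ∀ i, μ.map (X i) = gaussianReal 0 v)
    (hindep : Pairwise fun i j => IndepFun (X i) (X j) μ) {ε : ℝ} (hε : 0 < ε) :
    (μ {ω | ε ≤ |2 * (∑ i, max (X i ω) 0 ^ 2) / (Fintype.card ι * v) - 1|}).toReal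
      ≤ 6 / (Fintype.card ι * ε ^ 2) := by
  set N : ℝ := (Fintype.card ι : ℝ)
  have hN : N ≠ 0 := Nat.cast_ne_zero.2 Fintype.card_ne_zero
  have hv' : (v : ℝ) ≠ 0 := NNReal.coe_ne_zero.2 hv
  set g : ℝ → ℝ := fun x => 2 / (N * v) * max x 0 ^ 2
  have hg : Measurable g := by fun_prop
  have hXlaw (i : ι) : HasLaw (X i) (gaussianReal 0 v) μ := ⟨(hX i).aemeasurable, hlaw i⟩
  have hmean (i : ι) : μ[g ∘ X i] = 1 / N := by
    rw [(hXlaw i).integral_comp hg.aestronglyMeasurable]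
    simp only [g, integral_const_mul, integral_max_zero_sq_gaussianReal]
    field_simp
  have hsq (i : ι) : μ[(g ∘ X i) ^ 2] = 6 / N ^ 2 := by
    rw [show (g ∘ X i) ^ 2 = (fun x => g x ^ 2) ∘ X i from rfl,
      (hXlaw i).integral_comp (hg.pow_const 2).aestronglyMeasurable]
    simp only [g, mul_pow, ← pow_mul, integral_const_mul, integral_max_zero_pow_four_gaussianReal]
    field_simp
    ring
  have hmemLp (i : ι) : MemLp (g ∘ X i) 2 μ := by
    refine (memLp_map_measure_iff hg.aestronglyMeasurable (hX i).aemeasurable).1 ?_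
    rw [hlaw i, memLp_two_iff_integrable_sq hg.aestronglyMeasurable]
    simpa only [g, mul_pow, ← pow_mul] using
      (integrable_max_zero_pow (integrable_abs_pow_gaussianReal 0 v 4)).const_mul ((2 / (N * v)) ^ 2)
  have h := measure_abs_sum_sub_ge_le hmemLp (fun i j hij => (hindep hij).comp hg hg) hmean
    (fun i => (hsq i).le) hε
  have hset : {ω | ε ≤ |2 * (∑ i, max (X i ω) 0 ^ 2) / (N * v) - 1|}
      = {ω | ε ≤ |∑ i, (g ∘ X i) ω - N * (1 / N)|} := by
    ext ω
    simp only [Set.mem_ofPred_eq, Function.comp_apply, g, ← Finset.mul_sum]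
    field_simp
  rw [hset]
  exact h.trans_eq (by unfold N at hN ⊢; field_simp)

lemma euclNorm_sq {n : ℕ} (x : Fin n → ℝ) : euclNorm x ^ 2 = x ⬝ᵥ x :=
  Real.sq_sqrt (Finset.sum_nonneg fun i _ => mul_self_nonneg (x i))

lemma euclNorm_reluV_sq {n : ℕ} (x : Fin n → ℝ) : euclNorm (reluV x) ^ 2 = ∑ i, max (x i) 0 ^ 2 := by
  rw [euclNorm_sq]
  simp only [dotProduct, reluV, sq]

/- The entries of the augmented matrix `[W | b]`, indexed as in the independence hypothesis:
`(W *ᵥ u + b) k` is the sum over row `k` of `coeff u j * entry W b j`. -/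
namespace AugmentedMatrix

variable {Ω : Type*} {n m : ℕ}

def row (k : Fin n) : Finset ((Fin n × Fin m) ⊕ Fin n) := ({k} ×ˢ Finset.univ).disjSum {k}

def entry (W : Ω → Matrix (Fin n) (Fin m) ℝ) (b : Ω → Fin n → ℝ) :
    (Fin n × Fin m) ⊕ Fin n → Ω → ℝ :=
  Sum.elim (fun kl ω => W ω kl.1 kl.2) (fun k ω => b ω k)

def coeff (u : Fin m → ℝ) : (Fin n × Fin m) ⊕ Fin n → ℝ := Sum.elim (fun kl => u kl.2) 1

lemma sum_row {M : Type*} [AddCommMonoid M] (k : Fin n) (g : (Fin n × Fin m) ⊕ Fin n → M) :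
    ∑ j ∈ row k, g j = ∑ l, g (.inl (k, l)) + g (.inr k) := by
  rw [row, Finset.sum_disjSum, Finset.sum_product, Finset.sum_singleton, Finset.sum_singleton]

lemma disjoint_row {k k' : Fin n} (h : k ≠ k') : Disjoint (row (m := m) k) (row k') := by
  simp [row, Finset.disjoint_left, h, h.symm]

lemma mulVec_add_apply_eq_sum_row (W : Ω → Matrix (Fin n) (Fin m) ℝ) (b : Ω → Fin n → ℝ)
    (u : Fin m → ℝ) (ω : Ω) (k : Fin n) :
    (W ω *ᵥ u + b ω) k = ∑ j ∈ row k, coeff u j * entry W b j ω := by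
  simp [sum_row, coeff, entry, mulVec, dotProduct, mul_comm]

lemma sum_row_coeff_sq (u : Fin m → ℝ) (k : Fin n) :
    ∑ j ∈ row k, coeff u j ^ 2 = 1 + u ⬝ᵥ u := by
  simp [sum_row, coeff, dotProduct, sq, add_comm]

variable [MeasurableSpace Ω] {μ : Measure Ω} {W : Ω → Matrix (Fin n) (Fin m) ℝ}
  {b : Ω → Fin n → ℝ}

lemma measurable_mulVec_add_apply (hmeas : ∀ j, Measurable (entry W b j)) (u : Fin m → ℝ)
    (k : Fin n) : Measurable fun ω => (W ω *ᵥ u + b ω) k := by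
  simp only [mulVec_add_apply_eq_sum_row]
  exact Finset.measurable_sum _ fun j _ => (hmeas j).const_mul _

lemma map_mulVec_add_apply (hmeas : ∀ j, Measurable (entry W b j))
    (hindep : iIndepFun (entry W b) μ) {v : ℝ≥0}
    (hlaw : ∀ j, μ.map (entry W b j) = gaussianReal 0 v) (u : Fin m → ℝ) (k : Fin n) :
    μ.map (fun ω => (W ω *ᵥ u + b ω) k) = gaussianReal 0 ((1 + u ⬝ᵥ u).toNNReal * v) := by
  simp only [mulVec_add_apply_eq_sum_row, ← sum_row_coeff_sq u k]
  exact hindep.map_sum_mul_eq_gaussianReal hmeas hlaw _ _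

lemma indepFun_mulVec_add_apply (hmeas : ∀ j, Measurable (entry W b j))
    (hindep : iIndepFun (entry W b) μ) (u : Fin m → ℝ) {k k' : Fin n} (h : k ≠ k') :
    IndepFun (fun ω => (W ω *ᵥ u + b ω) k) (fun ω => (W ω *ᵥ u + b ω) k') μ := by
  simp only [mulVec_add_apply_eq_sum_row]
  exact hindep.indepFun_sum_mul_of_disjoint hmeas _ (disjoint_row h)

end AugmentedMatrix

/-- Let `u ∈ ℝ^{d_in}` be fixed, let `W ∈ ℝ^{d_out × d_in}` have jointly
independent entries `W_{k,l} ~ N(0, 1/d_out)` and `b ∈ ℝ^{d_out}` independent entries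
`b_k ~ N(0, 1/d_out)`, with `W` and `b` independent. Then for every `ε > 0`:
`P( |2‖φ(Wu + b)‖²/(1 + ‖u‖²) − 1| ≥ ε ) ≤ 12/(d_out·ε²)`. -/
theorem statement8
    {Ω : Type*} [MeasurableSpace Ω] (μ : Measure Ω) [IsProbabilityMeasure μ]
    (d_in d_out : ℕ) (hdout : 0 < d_out)
    (W : Ω → Matrix (Fin d_out) (Fin d_in) ℝ) (b : Ω → Fin d_out → ℝ)
    (hWmeas : ∀ k l, Measurable fun ω => W ω k l)
    (hbmeas : ∀ k, Measurable fun ω => b ω k)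
    (hWlaw : ∀ k l, Measure.map (fun ω => W ω k l) μ = gaussianReal 0 (d_out : ℝ≥0)⁻¹)
    (hblaw : ∀ k, Measure.map (fun ω => b ω k) μ = gaussianReal 0 (d_out : ℝ≥0)⁻¹)
    (hindep : iIndepFun
      (Sum.elim (fun (kl : Fin d_out × Fin d_in) (ω : Ω) => W ω kl.1 kl.2)
        (fun (k : Fin d_out) (ω : Ω) => b ω k)) μ)
    (u : Fin d_in → ℝ) (ε : ℝ) (hε : 0 < ε) :
    (μ {ω | ε ≤ |2 * euclNorm (reluV ((W ω).mulVec u + b ω)) ^ 2 / (1 + euclNorm u ^ 2) - 1|}).toReal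
      ≤ 12 / (d_out * ε ^ 2) := by
  have hmeas : ∀ j, Measurable (AugmentedMatrix.entry W b j) :=
    Sum.forall.2 ⟨fun kl => hWmeas kl.1 kl.2, hbmeas⟩
  have hlaw : ∀ j, μ.map (AugmentedMatrix.entry W b j) = gaussianReal 0 (d_out : ℝ≥0)⁻¹ :=
    Sum.forall.2 ⟨fun kl => hWlaw kl.1 kl.2, hblaw⟩
  have : Nonempty (Fin d_out) := ⟨⟨0, hdout⟩⟩
  have hu : 0 ≤ u ⬝ᵥ u := Finset.sum_nonneg fun l _ => mul_self_nonneg (u l)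
  have hv : (1 + u ⬝ᵥ u).toNNReal * (d_out : ℝ≥0)⁻¹ ≠ 0 := by positivity
  have h := measure_abs_relu_energy_sub_one_ge_le hv
    (AugmentedMatrix.measurable_mulVec_add_apply hmeas u)
    (AugmentedMatrix.map_mulVec_add_apply hmeas hindep hlaw u)
    (fun k k' hkk' => AugmentedMatrix.indepFun_mulVec_add_apply hmeas hindep u hkk') hε
  have hvar : (d_out : ℝ) * ((1 + u ⬝ᵥ u).toNNReal * (d_out : ℝ≥0)⁻¹ : ℝ≥0)
      = 1 + euclNorm u ^ 2 := by
    have hd : (d_out : ℝ) ≠ 0 := by positivity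
    rw [euclNorm_sq, NNReal.coe_mul, NNReal.coe_inv, NNReal.coe_natCast,
      Real.coe_toNNReal _ (by positivity)]
    field_simp
  calc _ ≤ 6 / (d_out * ε ^ 2) := by simpa only [euclNorm_reluV_sq, hvar, Fintype.card_fin] using h
    _ ≤ 12 / (d_out * ε ^ 2) := by gcongr; norm_num

end
end

section
/- Let u, v ∈ ℝ^n be nonzero vectors, set r = ‖u‖/‖v‖, and suppose 0 < cos(u,v) < 2r/(1 + r²). Then (1 + ⟨u,v⟩) / ( √(1 + ‖u‖²) · √(1 + ‖v‖²) ) > ⟨u,v⟩ / (‖u‖·‖v‖). -/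
/-!
Write `a = ‖u‖`, `b = ‖v‖` and `t = cos(u,v)`, so that `⟨u,v⟩ = t a b` and the hypothesis reads
`t (a² + b²) < 2ab`. Squaring, the claim becomes `t² (1 + a²)(1 + b²) < (1 + t a b)²`, that is
`t² (1 + a² + b²) < 1 + 2tab`: the sum of `t² < 1` (since `2ab ≤ a² + b²`) and `t` times the
hypothesis.
-/

open Matrix

noncomputable section

/-- The cosine similarity between two vectors in `ℝ^n`. -/
def cosSim {n : ℕ} (u v : Fin n → ℝ) : ℝ := u ⬝ᵥ v / (euclNorm u * euclNorm v)

lemma two_mul_div_div_one_add_div_sq {a b : ℝ} (hb : b ≠ 0) :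
    2 * (a / b) / (1 + (a / b) ^ 2) = 2 * a * b / (a ^ 2 + b ^ 2) := by
  have hab : a ^ 2 + b ^ 2 ≠ 0 := by positivity
  field_simp
  ring

lemma sq_mul_lt_sq_one_add_mul {a b t : ℝ} (ht : 0 < t)
    (htab : t * (a ^ 2 + b ^ 2) < 2 * a * b) :
    t ^ 2 * ((1 + a ^ 2) * (1 + b ^ 2)) < (1 + t * (a * b)) ^ 2 := by
  have ht1 : t < 1 := by nlinarith [sq_nonneg (a - b)]
  nlinarith [mul_lt_mul_of_pos_left htab ht]

lemma lt_one_add_mul_div_sqrt_mul_sqrt {a b t : ℝ} (ht : 0 < t)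
    (htab : t * (a ^ 2 + b ^ 2) < 2 * a * b) :
    t < (1 + t * (a * b)) / (Real.sqrt (1 + a ^ 2) * Real.sqrt (1 + b ^ 2)) := by
  have hab : 0 < a * b := by nlinarith [sq_nonneg a, sq_nonneg b]
  rw [lt_div_iff₀ (by positivity)]
  refine lt_of_pow_lt_pow_left₀ 2 (by positivity) ?_
  rw [mul_pow, mul_pow, Real.sq_sqrt (by positivity), Real.sq_sqrt (by positivity)]
  exact sq_mul_lt_sq_one_add_mul ht htab

theorem statement11_general {n : ℕ} (u v : Fin n → ℝ)
    (hcos0 : 0 < cosSim u v)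
    (hcos1 : cosSim u v <
      2 * (euclNorm u / euclNorm v) / (1 + (euclNorm u / euclNorm v) ^ 2)) :
    u ⬝ᵥ v / (euclNorm u * euclNorm v) <
      (1 + u ⬝ᵥ v) / (Real.sqrt (1 + euclNorm u ^ 2) * Real.sqrt (1 + euclNorm v ^ 2)) := by
  -- otherwise `x / 0 = 0` would make the cosine vanish
  have hnorms : euclNorm u * euclNorm v ≠ 0 := by
    rintro h
    simp [cosSim, h] at hcos0
  have hdot : u ⬝ᵥ v = cosSim u v * (euclNorm u * euclNorm v) := (div_mul_cancel₀ _ hnorms).symm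
  have hv : euclNorm v ≠ 0 := right_ne_zero_of_mul hnorms
  rw [two_mul_div_div_one_add_div_sq hv, lt_div_iff₀ (by positivity)] at hcos1
  change cosSim u v < _
  rw [hdot]
  exact lt_one_add_mul_div_sqrt_mul_sqrt hcos0 hcos1

/-- Let `u, v ∈ ℝ^n` be nonzero, set `r = ‖u‖/‖v‖`, and suppose
`0 < cos(u,v) < 2r/(1 + r²)`. Then
`(1 + ⟨u,v⟩)/(√(1 + ‖u‖²)·√(1 + ‖v‖²)) > ⟨u,v⟩/(‖u‖·‖v‖)`. -/
theorem statement11 {n : ℕ} (u v : Fin n → ℝ) (hu : u ≠ 0) (hv : v ≠ 0)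
    (hcos0 : 0 < cosSim u v)
    (hcos1 : cosSim u v <
      2 * (euclNorm u / euclNorm v) / (1 + (euclNorm u / euclNorm v) ^ 2)) :
    u ⬝ᵥ v / (euclNorm u * euclNorm v) <
      (1 + u ⬝ᵥ v) / (Real.sqrt (1 + euclNorm u ^ 2) * Real.sqrt (1 + euclNorm v ^ 2)) :=
  statement11_general u v hcos0 hcos1

end
end
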